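/- arXiv:1605.07437 — 5 statements merged into one kernel-verified Lean document; each statement's English description precedes it below -/
import Mathlib

section
/- Let C: b x₁² + a x₂² = x₀² be a Euclidean ellipse or hyperbola with a,b nonzero, a+b ≠ 0, a ≠ b. Then the Frégier conic of C is the image of C under the central scaling with factor (a−b)/(a+b) about the center [1,0,0]. -/
/-- Points of the real projective plane, given by homogeneous coordinates `[x₀, x₁, x₂]`. -/
abbrev PP := Fin 3 → ℝ

/-- Cross product: line joining two points / point of intersection of two lines. -/
def cross3 (a b : PP) : PP :=
  ![a 1 * b 2 - a 2 * b 1, a 2 * b 0 - a 0 * b 2, a 0 * b 1 - a 1 * b 0]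

def dot3 (a b : PP) : ℝ := a 0 * b 0 + a 1 * b 1 + a 2 * b 2

/-- `q`, `r`, `f` are collinear. -/
def Coll (q r f : PP) : Prop := dot3 (cross3 q r) f = 0

/-- Euclidean perpendicularity of the lines `pq` and `pr`
(standard inner product on directions in the affine chart `x₀ = 1`). -/
def EuclidPerp (p q r : PP) : Prop :=
  (q 1 * p 0 - p 1 * q 0) * (r 1 * p 0 - p 1 * r 0) +
    (q 2 * p 0 - p 2 * q 0) * (r 2 * p 0 - p 2 * r 0) = 0

/-- Hyperbolic perpendicularity of the lines `pq` and `pr`: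
conjugacy with respect to the absolute conic `N : x₁² + x₂² = x₀²`
(a line is perpendicular to another iff it contains its pole w.r.t. `N`). -/
def HypPerp (p q r : PP) : Prop :=
  -(cross3 p q 0 * cross3 p r 0) + cross3 p q 1 * cross3 p r 1 +
    cross3 p q 2 * cross3 p r 2 = 0

/-- Elliptic perpendicularity of the lines `pq` and `pr`:
conjugacy with respect to the absolute polarity `x₀² + x₁² + x₂²`. -/
def EllPerp (p q r : PP) : Prop :=
  dot3 (cross3 p q) (cross3 p r) = 0

/-- `f` lies on every chord `qr` of the conic `C` such that the legs `pq`, `pr`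
are perpendicular (a right triangle inscribed in `C` with right angle at `p`). -/
def IsFregier (OnC : PP → Prop) (Perp : PP → PP → PP → Prop) (p f : PP) : Prop :=
  ∀ q r : PP, OnC q → OnC r → cross3 p q ≠ 0 → cross3 p r ≠ 0 → Perp p q r →
    Coll q r f

/-- `f` is THE Frégier point of the conic `C` at `p`: the common point of the
hypotenuses of all right triangles inscribed in `C` with right angle at `p`
(unique up to scalar). -/
def IsFregierPoint (OnC : PP → Prop) (Perp : PP → PP → PP → Prop) (p f : PP) : Prop :=
  f ≠ 0 ∧ IsFregier OnC Perp p f ∧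
    ∀ f' : PP, f' ≠ 0 → IsFregier OnC Perp p f' → ∃ t : ℝ, t ≠ 0 ∧ f' = t • f

/-- The Frégier locus of a conic: all Frégier points as `p` varies on the conic. -/
def FregierLocus (OnC : PP → Prop) (Perp : PP → PP → PP → Prop) : Set PP :=
  { f | ∃ p : PP, p ≠ 0 ∧ OnC p ∧ IsFregierPoint OnC Perp p f }

/-! At a finite point `p` of `C`, write the leg `pq` in direction `u` and the perpendicular leg
`pr` in direction `t • J u` (`J` the quarter turn); the equations of `q` and `r` on `C` then imply,
by one polynomial identity, that `qr` passes through `g(p) = [(a+b)p₀, (a-b)p₁, -(a-b)p₂]`.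
At a point `p` at infinity (`C` a hyperbola) every right angle at `p` has the line at infinity as a
leg, so its hypotenuse passes through the other point at infinity of `C`, a multiple of `g(p)`.
Two right triangles at `p` with different hypotenuses show that `g(p)` is the only common point.
Finally `g(p)` is `(a+b)` times the image of `[p₀, p₁, -p₂] ∈ C` under the scaling. -/

open Matrix

theorem cross3_eq_crossProduct (u v : PP) : cross3 u v = u ⨯₃ v := rfl

theorem coll_iff {q r f : PP} : Coll q r f ↔ q ⨯₃ r ⬝ᵥ f = 0 := by
  rw [Coll, dot3, vec3_dotProduct, cross3_eq_crossProduct]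

theorem exists_eq_smul_of_cross_eq_zero {F : Type*} [Field F] {v w : Fin 3 → F} (hw : w ≠ 0)
    (h : w ⨯₃ v = 0) : ∃ t : F, v = t • w := by
  by_contra! hv
  exact crossProduct_ne_zero_iff_linearIndependent.mpr
    ((LinearIndependent.pair_iff' hw).mpr fun t => (hv t).symm) h

theorem exists_eq_smul_cross_of_dotProduct_eq_zero {F : Type*} [Field F] {ℓ₁ ℓ₂ v : Fin 3 → F}
    (hℓ : ℓ₁ ⨯₃ ℓ₂ ≠ 0) (h₁ : ℓ₁ ⬝ᵥ v = 0) (h₂ : ℓ₂ ⬝ᵥ v = 0) :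
    ∃ t : F, v = t • ℓ₁ ⨯₃ ℓ₂ :=
  exists_eq_smul_of_cross_eq_zero hℓ <| by
    rw [cross_cross_eq_smul_sub_smul, h₁, h₂, zero_smul, zero_smul, sub_zero]

theorem exists_eq_rotate_of_mul_add_mul_eq_zero {x₁ x₂ y₁ y₂ : ℝ} (hx : ¬(x₁ = 0 ∧ x₂ = 0))
    (h : x₁ * y₁ + x₂ * y₂ = 0) : ∃ t : ℝ, y₁ = -(t * x₂) ∧ y₂ = t * x₁ := by
  have hN : x₁ ^ 2 + x₂ ^ 2 ≠ 0 := fun hN => hx ⟨by nlinarith, by nlinarith⟩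
  refine ⟨(x₁ * y₂ - x₂ * y₁) / (x₁ ^ 2 + x₂ ^ 2), ?_, ?_⟩ <;> field_simp
  · linear_combination x₁ * h
  · linear_combination x₂ * h

section Fregier

variable {OnC : PP → Prop} {Perp : PP → PP → PP → Prop} {p f g : PP}

theorem IsFregier.smul (hf : IsFregier OnC Perp p f) (c : ℝ) : IsFregier OnC Perp p (c • f) :=
  fun q r hq hr hpq hpr hperp => by
    rw [coll_iff, dotProduct_smul, coll_iff.mp (hf q r hq hr hpq hpr hperp), smul_zero]

theorem isFregierPoint_iff_of_isFregier (hg₀ : g ≠ 0) (hg : IsFregier OnC Perp p g)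
    (huniq : ∀ f, IsFregier OnC Perp p f → ∃ t : ℝ, f = t • g) :
    IsFregierPoint OnC Perp p f ↔ ∃ t : ℝ, t ≠ 0 ∧ f = t • g := by
  constructor
  · rintro ⟨hf₀, hf, -⟩
    obtain ⟨t, rfl⟩ := huniq f hf
    exact ⟨t, fun ht => hf₀ (by rw [ht, zero_smul]), rfl⟩
  · rintro ⟨t, ht, rfl⟩
    refine ⟨smul_ne_zero ht hg₀, hg.smul t, fun f' hf'₀ hf' => ?_⟩
    obtain ⟨s, rfl⟩ := huniq f' hf'
    have hs : s ≠ 0 := fun hs => hf'₀ (by rw [hs, zero_smul])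
    exact ⟨s / t, div_ne_zero hs ht, by rw [smul_smul, div_mul_cancel₀ s ht]⟩

end Fregier

def centralConic (a b : ℝ) (v : PP) : Prop := b * v 1 ^ 2 + a * v 2 ^ 2 = v 0 ^ 2

def fregierPoint (a b : ℝ) (p : PP) : PP := ![(a + b) * p 0, (a - b) * p 1, -((a - b) * p 2)]

def reflect (p : PP) : PP := ![p 0, p 1, -p 2]

-- `p + λ [0, c, s]` meets the conic again at `λ = -2B/Q`, where `Q = b c² + a s²` and
-- `B = b p₁ c + a p₂ s`; this is that point multiplied by `Q`.
def secondIntersection (a b : ℝ) (p : PP) (c s : ℝ) : PP :=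
  ![(b * c ^ 2 + a * s ^ 2) * p 0,
    (b * c ^ 2 + a * s ^ 2) * p 1 - 2 * (b * p 1 * c + a * p 2 * s) * c,
    (b * c ^ 2 + a * s ^ 2) * p 2 - 2 * (b * p 1 * c + a * p 2 * s) * s]

section CentralConic

variable {a b : ℝ} {p q r : PP}

theorem reflect_reflect (p : PP) : reflect (reflect p) = p := by
  ext i; fin_cases i <;> simp [reflect]

theorem reflect_ne_zero (hp : p ≠ 0) : reflect p ≠ 0 := by
  contrapose! hp
  rw [← reflect_reflect p, hp]
  ext i; fin_cases i <;> simp [reflect]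

theorem centralConic_reflect (hp : centralConic a b p) : centralConic a b (reflect p) := by
  simpa [centralConic, reflect] using hp

theorem fregierPoint_reflect (hab : a + b ≠ 0) (p : PP) :
    fregierPoint a b (reflect p) =
      (a + b) • ![p 0, (a - b) / (a + b) * p 1, (a - b) / (a + b) * p 2] := by
  ext i
  fin_cases i <;>
    simp only [fregierPoint, reflect, Fin.isValue, Fin.zero_eta, Fin.mk_one, Fin.reduceFinMk,
      Nat.succ_eq_add_one, Nat.reduceAdd, cons_val_zero, cons_val_one, cons_val, mul_neg, neg_neg,
      Pi.smul_apply, smul_eq_mul] <;>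
    field_simp

theorem fregierPoint_of_at_infinity (hp0 : p 0 = 0) :
    fregierPoint a b p = (a - b) • reflect p := by
  ext i; fin_cases i <;> simp [fregierPoint, reflect, hp0]

theorem centralConic.coord_ne_zero_of_at_infinity (ha : a ≠ 0) (hb : b ≠ 0)
    (hp : centralConic a b p) (hp₀ : p ≠ 0) (hp0 : p 0 = 0) : p 1 ≠ 0 ∧ p 2 ≠ 0 := by
  have hC : b * p 1 ^ 2 + a * p 2 ^ 2 = 0 := by rw [hp, hp0]; ring
  refine ⟨fun h1 => hp₀ ?_, fun h2 => hp₀ ?_⟩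
  · have h2 : p 2 = 0 := by simpa [h1, ha] using hC
    ext i; fin_cases i <;> assumption
  · have h1 : p 1 = 0 := by simpa [h2, hb] using hC
    ext i; fin_cases i <;> assumption

theorem fregierPoint_ne_zero (ha : a ≠ 0) (hb : b ≠ 0) (hab : a + b ≠ 0) (hne : a ≠ b)
    (hp : centralConic a b p) (hp₀ : p ≠ 0) : fregierPoint a b p ≠ 0 := by
  intro h
  have h0 : (a + b) * p 0 = 0 := congrFun h 0
  have h1 : (a - b) * p 1 = 0 := congrFun h 1
  have hp0 : p 0 = 0 := (mul_eq_zero.mp h0).resolve_left hab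
  exact (hp.coord_ne_zero_of_at_infinity ha hb hp₀ hp0).1
    ((mul_eq_zero.mp h1).resolve_left (sub_ne_zero.mpr hne))

theorem exists_reflect_eq_smul_of_at_infinity (hb : b ≠ 0) (hp : centralConic a b p)
    (hq : centralConic a b q) (hp0 : p 0 = 0) (hq0 : q 0 = 0) (hpq : p ⨯₃ q ≠ 0) :
    ∃ t : ℝ, reflect p = t • q := by
  have hq₀ : q ≠ 0 := by rintro rfl; simp at hpq
  have hpq' : p 1 * q 2 - p 2 * q 1 ≠ 0 := by
    contrapose! hpq
    ext i; fin_cases i <;> simp [cross_apply, hp0, hq0, hpq]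
  unfold centralConic at hp hq
  have key : b * ((p 1 * q 2 - p 2 * q 1) * (p 1 * q 2 + p 2 * q 1)) = 0 := by
    linear_combination q 2 ^ 2 * hp - p 2 ^ 2 * hq + q 2 ^ 2 * p 0 * hp0 - p 2 ^ 2 * q 0 * hq0
  have hsum : p 1 * q 2 + p 2 * q 1 = 0 :=
    ((mul_eq_zero.mp key).resolve_left hb |> mul_eq_zero.mp).resolve_left hpq'
  refine exists_eq_smul_of_cross_eq_zero hq₀ ?_
  ext i
  fin_cases i <;>
    simp only [reflect, hp0, hq0, cross_apply, Fin.isValue, Fin.zero_eta, Fin.mk_one,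
      Fin.reduceFinMk, Nat.succ_eq_add_one, Nat.reduceAdd, cons_val, cons_val_one, cons_val_zero,
      mul_neg, mul_zero, zero_mul, neg_zero, sub_self, Pi.zero_apply]
  linear_combination -hsum

theorem coll_fregierPoint_of_at_infinity (ha : a ≠ 0) (hb : b ≠ 0) (hp : centralConic a b p)
    (hq : centralConic a b q) (hr : centralConic a b r) (hp₀ : p ≠ 0) (hp0 : p 0 = 0)
    (hpq : p ⨯₃ q ≠ 0) (hpr : p ⨯₃ r ≠ 0) (hperp : EuclidPerp p q r) :
    q ⨯₃ r ⬝ᵥ fregierPoint a b p = 0 := by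
  have hp1 := (hp.coord_ne_zero_of_at_infinity ha hb hp₀ hp0).1
  have hqr : q 0 * r 0 * (p 1 ^ 2 + p 2 ^ 2) = 0 := by
    simp only [EuclidPerp, hp0] at hperp
    linear_combination hperp
  rw [fregierPoint_of_at_infinity hp0]
  rcases mul_eq_zero.mp ((mul_eq_zero.mp hqr).resolve_right (by positivity)) with hq0 | hr0
  · obtain ⟨t, ht⟩ := exists_reflect_eq_smul_of_at_infinity hb hp hq hp0 hq0 hpq
    rw [ht, smul_smul, dotProduct_smul, dotProduct_comm, dot_self_cross, smul_zero]
  · obtain ⟨t, ht⟩ := exists_reflect_eq_smul_of_at_infinity hb hp hr hp0 hr0 hpr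
    rw [ht, smul_smul, dotProduct_smul, dotProduct_comm, dot_cross_self, smul_zero]

theorem affine_direction_ne_zero (hp0 : p 0 ≠ 0) (hpq : p ⨯₃ q ≠ 0) :
    ¬(q 1 * p 0 - p 1 * q 0 = 0 ∧ q 2 * p 0 - p 2 * q 0 = 0) := by
  rintro ⟨h1, h2⟩
  have h0 : p 1 * q 2 - p 2 * q 1 = 0 := (mul_eq_zero.mp
    (by linear_combination p 1 * h2 - p 2 * h1 : p 0 * (p 1 * q 2 - p 2 * q 1) = 0)).resolve_left hp0
  apply hpq
  ext i
  fin_cases i <;>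
    simp only [cross_apply, Fin.isValue, Fin.zero_eta, Fin.mk_one, Fin.reduceFinMk,
      Nat.succ_eq_add_one, Nat.reduceAdd, cons_val, cons_val_zero, cons_val_one, Pi.zero_apply] <;>
    linarith

theorem coll_fregierPoint_of_affine (hp : centralConic a b p) (hq : centralConic a b q)
    (hr : centralConic a b r) (hp0 : p 0 ≠ 0) (hpq : p ⨯₃ q ≠ 0) (hpr : p ⨯₃ r ≠ 0)
    (hperp : EuclidPerp p q r) : q ⨯₃ r ⬝ᵥ fregierPoint a b p = 0 := by
  obtain ⟨t, hv1, hv2⟩ :=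
    exists_eq_rotate_of_mul_add_mul_eq_zero (affine_direction_ne_zero hp0 hpq) hperp
  have ht : t ≠ 0 := by
    rintro rfl
    exact affine_direction_ne_zero hp0 hpr ⟨by linarith, by linarith⟩
  unfold centralConic at hp hq hr
  have key : t * (p 0 * (q ⨯₃ r ⬝ᵥ fregierPoint a b p)) = 0 := by
    simp only [cross_apply, vec3_dotProduct, fregierPoint, cons_val_zero, cons_val_one,
      cons_val_two, head_cons, tail_cons]
    linear_combination t ^ 2 * p 0 ^ 2 * hq - t ^ 2 * q 0 ^ 2 * hp + p 0 ^ 2 * hr - r 0 ^ 2 * hp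
      + (-b * (r 1 * p 0 + (p 1 * r 0 - t * (q 2 * p 0 - p 2 * q 0)))
        + t * (-(q 2 * ((a + b) * p 0)) + q 0 * (-((a - b) * p 2)))) * hv1
      + (-a * (r 2 * p 0 + (p 2 * r 0 + t * (q 1 * p 0 - p 1 * q 0)))
        + t * (q 1 * ((a + b) * p 0) - q 0 * ((a - b) * p 1))) * hv2
  simpa [ht, hp0] using key

theorem isFregier_fregierPoint (ha : a ≠ 0) (hb : b ≠ 0) (hp : centralConic a b p)
    (hp₀ : p ≠ 0) : IsFregier (centralConic a b) EuclidPerp p (fregierPoint a b p) :=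
  fun q r hq hr hpq hpr hperp => coll_iff.mpr <| by
    by_cases hp0 : p 0 = 0
    · exact coll_fregierPoint_of_at_infinity ha hb hp hq hr hp₀ hp0 hpq hpr hperp
    · exact coll_fregierPoint_of_affine hp hq hr hp0 hpq hpr hperp

theorem centralConic_secondIntersection (hp : centralConic a b p) (c s : ℝ) :
    centralConic a b (secondIntersection a b p c s) := by
  unfold centralConic at *
  simp only [secondIntersection, Fin.isValue, cons_val_one, cons_val_zero, cons_val]
  linear_combination (b * c ^ 2 + a * s ^ 2) ^ 2 * hp

theorem euclidPerp_secondIntersection (c s : ℝ) :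
    EuclidPerp p (secondIntersection a b p c s) (secondIntersection a b p (-s) c) := by
  simp only [EuclidPerp, secondIntersection, Fin.isValue, cons_val_one, cons_val_zero, cons_val]
  ring

theorem cross_secondIntersection_ne_zero (hp0 : p 0 ≠ 0) {c s : ℝ}
    (hB : b * p 1 * c + a * p 2 * s ≠ 0) : p ⨯₃ secondIntersection a b p c s ≠ 0 := by
  intro h
  have h1 := congrFun h 1
  have h2 := congrFun h 2
  simp only [cross_apply, secondIntersection, cons_val_zero, cons_val_one, cons_val_two,
    head_cons, tail_cons, Pi.zero_apply] at h1 h2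
  have hs : s = 0 := by
    have : 2 * (b * p 1 * c + a * p 2 * s) * p 0 * s = 0 := by linear_combination h1
    simpa [hB, hp0] using this
  have hc : c = 0 := by
    have : 2 * (b * p 1 * c + a * p 2 * s) * p 0 * c = 0 := by linear_combination -h2
    simpa [hB, hp0] using this
  exact hB (by rw [hs, hc]; ring)

theorem hypotenuse_cross_hypotenuse (hp : centralConic a b p) (c s d e : ℝ) :
    secondIntersection a b p c s ⨯₃ secondIntersection a b p (-s) c ⨯₃
        (secondIntersection a b p d e ⨯₃ secondIntersection a b p (-e) d) =
      (4 * (c * e - s * d) * (c * d + s * e) * (c ^ 2 + s ^ 2) * (d ^ 2 + e ^ 2) *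
        (a * b * p 0 ^ 3)) • fregierPoint a b p := by
  unfold centralConic at hp
  set K := (c ^ 2 + s ^ 2) * (d ^ 2 + e ^ 2) * (c * e - s * d) * (c * d + s * e)
  ext i
  fin_cases i <;>
    simp only [secondIntersection, cross_apply, fregierPoint, Fin.isValue, Fin.zero_eta,
      Fin.mk_one, Fin.reduceFinMk, Nat.succ_eq_add_one, Nat.reduceAdd, cons_val, cons_val_one,
      cons_val_zero, Pi.smul_apply, smul_eq_mul]
  · linear_combination 4 * a * b * (a + b) * p 0 ^ 2 * K * hp
  · linear_combination 4 * a * b * (a - b) * p 0 * p 1 * K * hp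
  · linear_combination -4 * a * b * (a - b) * p 0 * p 2 * K * hp

theorem exists_eq_smul_fregierPoint_of_affine (ha : a ≠ 0) (hb : b ≠ 0)
    (hp : centralConic a b p) (hp0 : p 0 ≠ 0) (hg : fregierPoint a b p ≠ 0) {f : PP}
    (hf : IsFregier (centralConic a b) EuclidPerp p f) :
    ∃ t : ℝ, f = t • fregierPoint a b p := by
  have hhyp : ∀ c s, b * p 1 * c + a * p 2 * s ≠ 0 → b * p 1 * (-s) + a * p 2 * c ≠ 0 →
      secondIntersection a b p c s ⨯₃ secondIntersection a b p (-s) c ⬝ᵥ f = 0 :=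
    fun c s hB hB' => coll_iff.mp (hf _ _ (centralConic_secondIntersection hp c s)
      (centralConic_secondIntersection hp (-s) c) (cross_secondIntersection_ne_zero hp0 hB)
      (cross_secondIntersection_ne_zero hp0 hB') (euclidPerp_secondIntersection c s))
  have hS : (b * p 1) ^ 2 + (a * p 2) ^ 2 ≠ 0 := by
    intro hS
    have h₁ : p 1 = 0 := by simpa [hb] using (by nlinarith : b * p 1 = 0)
    have h₂ : p 2 = 0 := by simpa [ha] using (by nlinarith : a * p 2 = 0)
    simp only [centralConic, h₁, h₂, ne_eq, OfNat.ofNat_ne_zero, not_false_eq_true, zero_pow,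
      mul_zero, add_zero] at hp
    exact hp0 (pow_eq_zero_iff two_ne_zero |>.mp hp.symm)
  -- The legs make the angles `π/4` and `arctan (1/2)` with the normal `(b p₁, a p₂)` at `p`,
  -- so none of them is tangent to `C`.
  have hℓ := hypotenuse_cross_hypotenuse hp (b * p 1 - a * p 2) (b * p 1 + a * p 2)
    (2 * (b * p 1) - a * p 2) (b * p 1 + 2 * (a * p 2))
  obtain ⟨τ, hτ⟩ := exists_eq_smul_cross_of_dotProduct_eq_zero
    (by
      rw [hℓ]
      refine smul_ne_zero ?_ hg
      convert (by simp [hS, ha, hb, hp0] :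
        -120 * ((b * p 1) ^ 2 + (a * p 2) ^ 2) ^ 4 * (a * b * p 0 ^ 3) ≠ 0) using 2
      ring)
    (hhyp (b * p 1 - a * p 2) (b * p 1 + a * p 2)
      (fun h => hS (by linear_combination h)) (fun h => hS (by linear_combination -h)))
    (hhyp (2 * (b * p 1) - a * p 2) (b * p 1 + 2 * (a * p 2))
      (fun h => hS (by linear_combination h / 2)) (fun h => hS (by linear_combination -h)))
  rw [hℓ, smul_smul] at hτ
  exact ⟨_, hτ⟩

theorem exists_eq_smul_fregierPoint_of_at_infinity (ha : a ≠ 0) (hb : b ≠ 0) (hne : a ≠ b)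
    (hp : centralConic a b p) (hp₀ : p ≠ 0) (hp0 : p 0 = 0) {f : PP}
    (hf : IsFregier (centralConic a b) EuclidPerp p f) :
    ∃ t : ℝ, f = t • fregierPoint a b p := by
  obtain ⟨hp1, hp2⟩ := hp.coord_ne_zero_of_at_infinity ha hb hp₀ hp0
  have hpq : p ⨯₃ reflect p ≠ 0 := fun h => by
    have := congrFun h 0
    simp only [reflect, cross_apply, Fin.isValue, cons_val, cons_val_one, cons_val_zero,
      Pi.zero_apply] at this
    exact mul_ne_zero hp1 hp2 (by linear_combination -this / 2)
  have hline : ∀ r, centralConic a b r → r 0 ≠ 0 → reflect p ⨯₃ r ⬝ᵥ f = 0 :=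
    fun r hr hr0 => coll_iff.mp (hf _ r (centralConic_reflect hp) hr hpq
      (fun h => by simpa [cross3, hp0, hp2, hr0] using congrFun h 1)
      (by simp [EuclidPerp, reflect, hp0]))
  set B := b * p 1 ^ 2
  have hB₀ : B ≠ 0 := mul_ne_zero hb (pow_ne_zero 2 hp1)
  have hr : ∀ σ : ℝ, σ ^ 2 = 1 →
      centralConic a b ![σ * (2 * B), p 1 * (1 + B), p 2 * (1 - B)] := fun σ hσ => by
    unfold centralConic at hp ⊢
    simp only [hp0, cons_val_zero, cons_val_one, cons_val_two, head_cons, tail_cons] at hp ⊢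
    linear_combination (1 - B) ^ 2 * hp - 4 * B ^ 2 * hσ
  have hℓ : reflect p ⨯₃ ![2 * B, p 1 * (1 + B), p 2 * (1 - B)] ⨯₃
      (reflect p ⨯₃ ![-(2 * B), p 1 * (1 + B), p 2 * (1 - B)]) =
        (-(8 * B * p 1 * p 2)) • reflect p := by
    ext i
    fin_cases i <;>
      simp only [reflect, cross_apply, Fin.isValue, Fin.zero_eta, Fin.mk_one, Fin.reduceFinMk,
        Nat.succ_eq_add_one, Nat.reduceAdd, cons_val_one, cons_val_zero, cons_val, Pi.smul_apply,
        smul_eq_mul] <;>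
      ring
  obtain ⟨τ, hτ⟩ := exists_eq_smul_cross_of_dotProduct_eq_zero
    (hℓ ▸ smul_ne_zero (by simp [hB₀, hp1, hp2]) (reflect_ne_zero hp₀))
    (hline _ (by simpa using hr 1 (one_pow 2)) (by simp [hB₀]))
    (hline _ (by simpa using hr (-1) (by norm_num)) (by simp [hB₀]))
  refine ⟨τ * -(8 * B * p 1 * p 2) / (a - b), ?_⟩
  rw [hτ, hℓ, fregierPoint_of_at_infinity hp0, smul_smul, smul_smul,
    div_mul_cancel₀ _ (sub_ne_zero.mpr hne)]

theorem isFregierPoint_centralConic_iff (ha : a ≠ 0) (hb : b ≠ 0) (hab : a + b ≠ 0)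
    (hne : a ≠ b) (hp : centralConic a b p) (hp₀ : p ≠ 0) {f : PP} :
    IsFregierPoint (centralConic a b) EuclidPerp p f ↔
      ∃ t : ℝ, t ≠ 0 ∧ f = t • fregierPoint a b p := by
  have hg := fregierPoint_ne_zero ha hb hab hne hp hp₀
  refine isFregierPoint_iff_of_isFregier hg (isFregier_fregierPoint ha hb hp hp₀) fun f hf => ?_
  by_cases hp0 : p 0 = 0
  · exact exists_eq_smul_fregierPoint_of_at_infinity ha hb hne hp hp₀ hp0 hf
  · exact exists_eq_smul_fregierPoint_of_affine ha hb hp hp0 hg hf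

end CentralConic

/-- For the central conic `C : b x₁² + a x₂² = x₀²` (`a, b ≠ 0`,
`a + b ≠ 0`, `a ≠ b`), the Frégier conic of `C` is the image of `C` under the
central scaling with factor `(a−b)/(a+b)` about the center `[1,0,0]`. -/
theorem fregier_conic_is_scaled_conic_euclidean
    (a b : ℝ) (ha : a ≠ 0) (hb : b ≠ 0) (hab : a + b ≠ 0) (hne : a ≠ b) :
    FregierLocus (fun v => b * v 1 ^ 2 + a * v 2 ^ 2 = v 0 ^ 2) EuclidPerp
      = { f : PP | ∃ p : PP, ∃ t : ℝ, p ≠ 0 ∧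
            b * p 1 ^ 2 + a * p 2 ^ 2 = p 0 ^ 2 ∧ t ≠ 0 ∧
            f = t • ![p 0, (a - b) / (a + b) * p 1, (a - b) / (a + b) * p 2] } := by
  ext f
  constructor
  · rintro ⟨p, hp₀, hp, hf⟩
    obtain ⟨t, ht, rfl⟩ := (isFregierPoint_centralConic_iff ha hb hab hne hp hp₀).mp hf
    refine ⟨reflect p, t * (a + b), reflect_ne_zero hp₀, centralConic_reflect hp,
      mul_ne_zero ht hab, ?_⟩
    rw [mul_smul, ← fregierPoint_reflect hab, reflect_reflect]
  · rintro ⟨p, t, hp₀, hp, ht, rfl⟩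
    refine ⟨reflect p, reflect_ne_zero hp₀, centralConic_reflect hp,
      (isFregierPoint_centralConic_iff ha hb hab hne (centralConic_reflect hp)
        (reflect_ne_zero hp₀)).mpr ⟨t / (a + b), div_ne_zero ht hab, ?_⟩⟩
    rw [fregierPoint_reflect hab, smul_smul, div_mul_cancel₀ _ hab]
end

section
/- If C is a Euclidean circle x₁² + x₂² = r² x₀² (r > 0), then for every point p on C the Frégier point of C at p equals the center [1,0,0]; hence the Frégier locus of a circle is a single point, its center. -/
/-!
Let `a` be the right-angle vertex and `b`, `c` the other vertices, as affine points of a circle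
centred at the origin. Then `(b + c) · (b - a) = |b|² - |a|² + (b - a) · (c - a) = 0`, and
symmetrically `(b + c) · (c - a) = 0`. The legs `b - a`, `c - a` are nonzero and orthogonal, so they
span the plane, whence `b + c = 0`: every hypotenuse is a diameter and passes through the centre.
The centre is therefore a Frégier point, and by uniqueness up to scalar it is the only one.
-/

lemma IsFregierPoint.exists_smul_eq {OnC : PP → Prop} {Perp : PP → PP → PP → Prop} {p f f' : PP}
    (hf : IsFregierPoint OnC Perp p f) (hf'0 : f' ≠ 0) (hf' : IsFregier OnC Perp p f') :
    ∃ t : ℝ, t ≠ 0 ∧ f = t • f' := by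
  obtain ⟨t, ht, rfl⟩ := hf.2.2 f' hf'0 hf'
  exact ⟨t⁻¹, inv_ne_zero ht, by rw [smul_smul, inv_mul_cancel₀ ht, one_smul]⟩

@[simp]
lemma cross3_zero_right (p : PP) : cross3 p 0 = 0 := by
  ext i; fin_cases i <;> simp [cross3]

lemma ne_zero_of_cross3_ne_zero {p q : PP} (h : cross3 p q ≠ 0) : q ≠ 0 := by
  rintro rfl; exact h (cross3_zero_right p)

lemma leg_sq_ne_zero_of_cross3_ne_zero {p q : PP} (hp0 : p 0 ≠ 0) (hpq : cross3 p q ≠ 0) :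
    (q 1 * p 0 - p 1 * q 0) ^ 2 + (q 2 * p 0 - p 2 * q 0) ^ 2 ≠ 0 := by
  intro h
  obtain ⟨h1, h2⟩ := (add_eq_zero_iff_of_nonneg (sq_nonneg _) (sq_nonneg _)).mp h
  rw [sq_eq_zero_iff] at h1 h2
  have h0 : p 1 * q 2 - p 2 * q 1 = 0 :=
    mul_left_cancel₀ hp0 (by linear_combination p 1 * h2 - p 2 * h1)
  apply hpq
  ext i; fin_cases i <;> simp [cross3] <;> linarith

lemma eq_zero_of_orthogonal_of_orthogonal {u₁ u₂ v₁ v₂ w₁ w₂ : ℝ}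
    (hu : u₁ ^ 2 + u₂ ^ 2 ≠ 0) (hv : v₁ ^ 2 + v₂ ^ 2 ≠ 0) (huv : u₁ * v₁ + u₂ * v₂ = 0)
    (hwu : w₁ * u₁ + w₂ * u₂ = 0) (hwv : w₁ * v₁ + w₂ * v₂ = 0) : w₁ = 0 ∧ w₂ = 0 := by
  have hdet : u₁ * v₂ - u₂ * v₁ ≠ 0 := by
    intro h
    apply mul_ne_zero hu hv
    linear_combination (u₁ * v₂ - u₂ * v₁) * h + (u₁ * v₁ + u₂ * v₂) * huv
  constructor
  · exact (mul_eq_zero.mp (by linear_combination v₂ * hwu - u₂ * hwv :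
      w₁ * (u₁ * v₂ - u₂ * v₁) = 0)).resolve_right hdet
  · exact (mul_eq_zero.mp (by linear_combination u₁ * hwv - v₁ * hwu :
      w₂ * (u₁ * v₂ - u₂ * v₁) = 0)).resolve_right hdet

lemma coll_center_iff {q s : PP} : Coll q s ![1, 0, 0] ↔ q 1 * s 2 - q 2 * s 1 = 0 := by
  simp [Coll, dot3, cross3]

def OnCircle (R : ℝ) (v : PP) : Prop := v 1 ^ 2 + v 2 ^ 2 = R ^ 2 * v 0 ^ 2

namespace OnCircle

variable {R : ℝ} {p q s : PP}

lemma coord_zero_ne_zero (hv : OnCircle R p) (hp : p ≠ 0) : p 0 ≠ 0 := by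
  intro h0
  rw [OnCircle, h0] at hv
  have h1 : p 1 = 0 := by nlinarith [sq_nonneg (p 1), sq_nonneg (p 2)]
  have h2 : p 2 = 0 := by nlinarith [sq_nonneg (p 1), sq_nonneg (p 2)]
  apply hp
  ext i; fin_cases i <;> simp [h0, h1, h2]

/-- Thales: a right angle inscribed in a circle subtends a diameter. -/
theorem coll_center_of_euclidPerp (hp : OnCircle R p) (hq : OnCircle R q) (hs : OnCircle R s)
    (hp0 : p ≠ 0) (hpq : cross3 p q ≠ 0) (hps : cross3 p s ≠ 0) (hperp : EuclidPerp p q s) :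
    Coll q s ![1, 0, 0] := by
  have hp0' := hp.coord_zero_ne_zero hp0
  have hs0 := hs.coord_zero_ne_zero (ne_zero_of_cross3_ne_zero hps)
  unfold OnCircle at hp hq hs
  unfold EuclidPerp at hperp
  -- `w = q 0 * s 0 * (b + c)` in the notation of the header
  obtain ⟨hw₁, hw₂⟩ := eq_zero_of_orthogonal_of_orthogonal
    (w₁ := s 0 * q 1 + q 0 * s 1) (w₂ := s 0 * q 2 + q 0 * s 2)
    (leg_sq_ne_zero_of_cross3_ne_zero hp0' hpq) (leg_sq_ne_zero_of_cross3_ne_zero hp0' hps) hperp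
    (mul_left_cancel₀ hp0' (by
      linear_combination s 0 * p 0 ^ 2 * hq - s 0 * q 0 ^ 2 * hp + q 0 * hperp))
    (mul_left_cancel₀ hp0' (by
      linear_combination q 0 * p 0 ^ 2 * hs - q 0 * s 0 ^ 2 * hp + s 0 * hperp))
  rw [coll_center_iff]
  exact mul_left_cancel₀ hs0 (by linear_combination s 2 * hw₁ - s 1 * hw₂)

end OnCircle

theorem fregier_locus_of_circle_is_center_general
    (r : ℝ) :
    (∀ p f : PP, p ≠ 0 → p 1 ^ 2 + p 2 ^ 2 = r ^ 2 * p 0 ^ 2 →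
      IsFregierPoint (fun v => v 1 ^ 2 + v 2 ^ 2 = r ^ 2 * v 0 ^ 2) EuclidPerp p f →
      ∃ t : ℝ, t ≠ 0 ∧ f = t • ![(1 : ℝ), 0, 0]) ∧
    FregierLocus (fun v => v 1 ^ 2 + v 2 ^ 2 = r ^ 2 * v 0 ^ 2) EuclidPerp
      ⊆ { f : PP | ∃ t : ℝ, t ≠ 0 ∧ f = t • ![(1 : ℝ), 0, 0] } := by
  have center_ne_zero : (![1, 0, 0] : PP) ≠ 0 := fun h => by simpa using congrFun h 0
  have fregier_point_eq : ∀ p f : PP, p ≠ 0 → OnCircle r p →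
      IsFregierPoint (OnCircle r) EuclidPerp p f → ∃ t : ℝ, t ≠ 0 ∧ f = t • ![(1 : ℝ), 0, 0] :=
    fun p f hp0 hp hf => hf.exists_smul_eq center_ne_zero
      fun _ _ hq hs hpq hps hperp => hp.coll_center_of_euclidPerp hq hs hp0 hpq hps hperp
  exact ⟨fregier_point_eq, fun f ⟨p, hp0, hp, hf⟩ => fregier_point_eq p f hp0 hp hf⟩

/-- For a Euclidean circle `x₁² + x₂² = r² x₀²` (`r > 0`), the
Frégier point at every point of the circle is the center `[1,0,0]`; hence the
Frégier locus of a circle is the single point given by its center. -/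
theorem fregier_locus_of_circle_is_center
    (r : ℝ) (hr : 0 < r) :
    (∀ p f : PP, p ≠ 0 → p 1 ^ 2 + p 2 ^ 2 = r ^ 2 * p 0 ^ 2 →
      IsFregierPoint (fun v => v 1 ^ 2 + v 2 ^ 2 = r ^ 2 * v 0 ^ 2) EuclidPerp p f →
      ∃ t : ℝ, t ≠ 0 ∧ f = t • ![(1 : ℝ), 0, 0]) ∧
    FregierLocus (fun v => v 1 ^ 2 + v 2 ^ 2 = r ^ 2 * v 0 ^ 2) EuclidPerp
      ⊆ { f : PP | ∃ t : ℝ, t ≠ 0 ∧ f = t • ![(1 : ℝ), 0, 0] } :=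
  fregier_locus_of_circle_is_center_general r
end

section
/- If C is the right hyperbola x₁² − x₂² = x₀² in the Euclidean plane, then for every point p on C the Frégier point of C at p lies on the line at infinity x₀ = 0; moreover its direction is the normal direction of C at p. -/
lemma key_0_0 (p0 p1 p2 q0 q1 q2 r0 r1 r2 : ℝ)
    (hp : p1^2 - p2^2 = p0^2) (hq : q1^2 - q2^2 = q0^2) (hr : r1^2 - r2^2 = r0^2)
    (hE : (q1*p0-p1*q0)*(r1*p0-p1*r0)+(q2*p0-p2*q0)*(r2*p0-p2*r0) = 0) :
    ((q2*r0-q0*r2)*p1 - (q0*r1-q1*r0)*p2) * (p1*q2-p2*q1) * (p1*r2-p2*r1) = 0 := by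
  linear_combination ((-1/2)*p2*q2^2*r0*r1 + (-1/2)*p2*q1^2*r0*r1 + (1/2)*p2*q0*q1*r2^2 + (1/2)*p2*q0*q1*r1^2 + (1/2)*p1*q2^2*r0*r2 + (1/2)*p1*q1^2*r0*r2 + (-1/2)*p1*q0*q2*r2^2 + (-1/2)*p1*q0*q2*r1^2 + (1/2)*p0*q2^2*r1*r2 + (-1/2)*p0*q1*q2*r2^2 + (1/2)*p0*q1*q2*r1^2 + (-1/2)*p0*q1^2*r1*r2) * hp + ((1/2)*p2^3*r0*r1 + (-1/2)*p1*p2^2*r0*r2 + (1/2)*p1^2*p2*r0*r1 + (-1/2)*p1^3*r0*r2 + (-1/2)*p0*p2^2*r1*r2 + (1/2)*p0*p1*p2*r2^2 + (-1/2)*p0*p1*p2*r1^2 + (1/2)*p0*p1^2*r1*r2) * hq + ((-1/2)*p2^3*q0*q1 + (1/2)*p1*p2^2*q0*q2 + (-1/2)*p1^2*p2*q0*q1 + (1/2)*p1^3*q0*q2 + (1/2)*p0*p2^2*q1*q2 + (-1/2)*p0*p1*p2*q2^2 + (1/2)*p0*p1*p2*q1^2 + (-1/2)*p0*p1^2*q1*q2)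 * hr + ((-1/2)*p2*q1*r0 + (1/2)*p2*q0*r1 + (1/2)*p1*q2*r0 + (-1/2)*p1*q0*r2 + (1/2)*p0*q2*r1 + (-1/2)*p0*q1*r2) * hE

lemma key_0_1 (p0 p1 p2 q0 q1 q2 r0 r1 r2 : ℝ)
    (hp : p1^2 - p2^2 = p0^2) (hq : q1^2 - q2^2 = q0^2) (hr : r1^2 - r2^2 = r0^2)
    (hE : (q1*p0-p1*q0)*(r1*p0-p1*r0)+(q2*p0-p2*q0)*(r2*p0-p2*r0) = 0) :
    ((q2*r0-q0*r2)*p1 - (q0*r1-q1*r0)*p2) * (p1*q2-p2*q1) * (p2*r0-p0*r2) = 0 := by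
  linear_combination ((-1/2)*p2*q2^2*r2^2 + (1/2)*p2*q2^2*r0^2 + (1/2)*p2*q1^2*r1^2 + (-1/2)*p2*q0*q2*r0*r2 + (-1/2)*p2*q0*q1*r0*r1 + (-1/2)*p2*q0^2*r2^2 + (-1/2)*p1*q2^2*r1*r2 + (1/2)*p1*q1*q2*r2^2 + (-1/2)*p1*q1*q2*r1^2 + (1/2)*p1*q1*q2*r0^2 + (1/2)*p1*q1^2*r1*r2 + (1/2)*p1*q0*q2*r0*r1 + (-1/2)*p1*q0*q1*r0*r2 + (-1/2)*p1*q0^2*r1*r2 + (-1/2)*p0*q2^2*r0*r2 + (-1/2)*p0*q1*q2*r0*r1 + (1/2)*p0*q0*q2*r2^2 + (1/2)*p0*q0*q1*r1*r2) * hp + ((1/2)*p2^3*r2^2 + (-1/2)*p2^3*r0^2 + (1/2)*p1*p2^2*r1*r2 + (-1/2)*p1^2*p2*r2^2 + (-1/2)*p1^2*p2*r0^2 + (-1/2)*p1^3*r1*r2 + 1*p0*p2^2*r0*r2 + (1/2)*p0*p1*p2*r0*r1 + (1/2)*p0*p1^2*r0*r2) * hq + ((1/2)*p2^3*q1^2 +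 (-1/2)*p1*p2^2*q1*q2 + (-1/2)*p1^2*p2*q1^2 + (1/2)*p1^3*q1*q2 + (1/2)*p0*p1*p2*q0*q1 + (-1/2)*p0*p1^2*q0*q2) * hr + ((-1/2)*p2*q2*r2 + (1/2)*p2*q1*r1 + (-1/2)*p2*q0*r0 + (-1/2)*p1*q2*r1 + (1/2)*p1*q1*r2 + (-1/2)*p0*q2*r0 + (1/2)*p0*q0*r2) * hE

lemma key_0_2 (p0 p1 p2 q0 q1 q2 r0 r1 r2 : ℝ)
    (hp : p1^2 - p2^2 = p0^2) (hq : q1^2 - q2^2 = q0^2) (hr : r1^2 - r2^2 = r0^2)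
    (hE : (q1*p0-p1*q0)*(r1*p0-p1*r0)+(q2*p0-p2*q0)*(r2*p0-p2*r0) = 0) :
    ((q2*r0-q0*r2)*p1 - (q0*r1-q1*r0)*p2) * (p1*q2-p2*q1) * (p0*r1-p1*r0) = 0 := by
  linear_combination ((1/2)*p2*q2^2*r1*r2 + (-1/2)*p2*q1*q2*r2^2 + (1/2)*p2*q1*q2*r1^2 + (-1/2)*p2*q1*q2*r0^2 + (-1/2)*p2*q1^2*r1*r2 + (1/2)*p2*q0*q2*r0*r1 + (-1/2)*p2*q0*q1*r0*r2 + (1/2)*p2*q0^2*r1*r2 + (1/2)*p1*q2^2*r2^2 + (-1/2)*p1*q1^2*r1^2 + (-1/2)*p1*q1^2*r0^2 + (1/2)*p1*q0*q2*r0*r2 + (1/2)*p1*q0*q1*r0*r1 + (1/2)*p1*q0^2*r1^2 + (1/2)*p0*q1*q2*r0*r2 + (1/2)*p0*q1^2*r0*r1 + (-1/2)*p0*q0*q2*r1*r2 + (-1/2)*p0*q0*q1*r1^2) * hp + ((-1/2)*p2^3*r1*r2 + (-1/2)*p1*p2^2*r1^2 + (1/2)*p1*p2^2*r0^2 + (1/2)*p1^2*p2*r1*r2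 + (1/2)*p1^3*r1^2 + (1/2)*p1^3*r0^2 + (-1/2)*p0*p2^2*r0*r1 + (-1/2)*p0*p1*p2*r0*r2 + (-1)*p0*p1^2*r0*r1) * hq + ((1/2)*p2^3*q1*q2 + (-1/2)*p1*p2^2*q2^2 + (-1/2)*p1^2*p2*q1*q2 + (1/2)*p1^3*q2^2 + (1/2)*p0*p2^2*q0*q1 + (-1/2)*p0*p1*p2*q0*q2) * hr + ((1/2)*p2*q2*r1 + (-1/2)*p2*q1*r2 + (1/2)*p1*q2*r2 + (-1/2)*p1*q1*r1 + (1/2)*p1*q0*r0 + (1/2)*p0*q1*r0 + (-1/2)*p0*q0*r1) * hE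

lemma key_1_0 (p0 p1 p2 q0 q1 q2 r0 r1 r2 : ℝ)
    (hp : p1^2 - p2^2 = p0^2) (hq : q1^2 - q2^2 = q0^2) (hr : r1^2 - r2^2 = r0^2)
    (hE : (q1*p0-p1*q0)*(r1*p0-p1*r0)+(q2*p0-p2*q0)*(r2*p0-p2*r0) = 0) :
    ((q2*r0-q0*r2)*p1 - (q0*r1-q1*r0)*p2) * (p2*q0-p0*q2) * (p1*r2-p2*r1) = 0 := by
  linear_combination ((1/2)*p2*q2^2*r2^2 + (1/2)*p2*q2^2*r0^2 + (-1/2)*p2*q1^2*r1^2 + (1/2)*p2*q0*q2*r0*r2 + (1/2)*p2*q0*q1*r0*r1 + (-1/2)*p2*q0^2*r2^2 + (-1/2)*p1*q2^2*r1*r2 + (1/2)*p1*q1*q2*r2^2 + (-1/2)*p1*q1*q2*r1^2 + (1/2)*p1*q1*q2*r0^2 + (1/2)*p1*q1^2*r1*r2 + (1/2)*p1*q0*q2*r0*r1 + (-1/2)*p1*q0*q1*r0*r2 + (-1/2)*p1*q0^2*r1*r2 + (-1/2)*p0*q2^2*r0*r2 + (-1/2)*p0*q1*q2*r0*r1 +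 (1/2)*p0*q0*q2*r2^2 + (1/2)*p0*q0*q1*r1*r2) * hp + ((1/2)*p2^3*r2^2 + (-1)*p2^3*r1^2 + (1/2)*p2^3*r0^2 + (1/2)*p1*p2^2*r1*r2 + (1/2)*p1^2*p2*r2^2 + (1/2)*p1^2*p2*r0^2 + (-1/2)*p1^3*r1*r2 + (-1/2)*p0*p1*p2*r0*r1 + (1/2)*p0*p1^2*r0*r2) * hq + ((-1)*p2^3*q2^2 + (1/2)*p2^3*q1^2 + (-1/2)*p1*p2^2*q1*q2 + (1/2)*p1^2*p2*q1^2 + (1/2)*p1^3*q1*q2 + (-1)*p0*p2^2*q0*q2 + (-1/2)*p0*p1*p2*q0*q1 + (-1/2)*p0*p1^2*q0*q2) * hr + ((1/2)*p2*q2*r2 + (-1/2)*p2*q1*r1 + (1/2)*p2*q0*r0 + (-1/2)*p1*q2*r1 + (1/2)*p1*q1*r2 + (-1/2)*p0*q2*r0 + (1/2)*p0*q0*r2) * hE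

lemma key_1_1 (p0 p1 p2 q0 q1 q2 r0 r1 r2 : ℝ)
    (hp : p1^2 - p2^2 = p0^2) (hq : q1^2 - q2^2 = q0^2) (hr : r1^2 - r2^2 = r0^2)
    (hE : (q1*p0-p1*q0)*(r1*p0-p1*r0)+(q2*p0-p2*q0)*(r2*p0-p2*r0) = 0) :
    ((q2*r0-q0*r2)*p1 - (q0*r1-q1*r0)*p2) * (p2*q0-p0*q2) * (p2*r0-p0*r2) = 0 := by
  linear_combination ((-1/2)*p2*q2^2*r0*r1 + (1/2)*p2*q1^2*r0*r1 + (1/2)*p2*q0*q1*r2^2 + (-1/2)*p2*q0*q1*r1^2 + (-1/2)*p1*q2^2*r0*r2 + (1/2)*p1*q1^2*r0*r2 + (1/2)*p1*q0*q2*r2^2 + (-1/2)*p1*q0*q2*r1^2 + (1/2)*p0*q2^2*r1*r2 + (-1/2)*p0*q1*q2*r2^2 + (1/2)*p0*q1*q2*r1^2 + (-1/2)*p0*q1^2*r1*r2) * hp + ((1/2)*p2^3*r0*r1 + (1/2)*p1*p2^2*r0*r2 + (-1/2)*p1^2*p2*r0*r1 + (-1/2)*p1^3*r0*r2 + (-1/2)*p0*p2^2*r1*r2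 + (-1/2)*p0*p1*p2*r2^2 + (1/2)*p0*p1*p2*r1^2 + (1/2)*p0*p1^2*r1*r2) * hq + ((-1/2)*p2^3*q0*q1 + (-1/2)*p1*p2^2*q0*q2 + (1/2)*p1^2*p2*q0*q1 + (1/2)*p1^3*q0*q2 + (1/2)*p0*p2^2*q1*q2 + (1/2)*p0*p1*p2*q2^2 + (-1/2)*p0*p1*p2*q1^2 + (-1/2)*p0*p1^2*q1*q2) * hr + ((1/2)*p2*q1*r0 + (-1/2)*p2*q0*r1 + (1/2)*p1*q2*r0 + (-1/2)*p1*q0*r2 + (1/2)*p0*q2*r1 + (-1/2)*p0*q1*r2) * hE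

lemma key_1_2 (p0 p1 p2 q0 q1 q2 r0 r1 r2 : ℝ)
    (hp : p1^2 - p2^2 = p0^2) (hq : q1^2 - q2^2 = q0^2) (hr : r1^2 - r2^2 = r0^2)
    (hE : (q1*p0-p1*q0)*(r1*p0-p1*r0)+(q2*p0-p2*q0)*(r2*p0-p2*r0) = 0) :
    ((q2*r0-q0*r2)*p1 - (q0*r1-q1*r0)*p2) * (p2*q0-p0*q2) * (p0*r1-p1*r0) = 0 := by
  linear_combination (1*p2*q0*q2*r2^2 + (-1)*p2*q0*q2*r1^2 + (1/2)*p2*q0*q2*r0^2 + (1/2)*p2*q0^2*r0*r2 + 1*p1*q2^2*r0*r1 + (-1)*p1*q1^2*r0*r1 + (1/2)*p1*q0*q1*r0^2 + (1/2)*p1*q0^2*r0*r1 + (-1/2)*p0*q2^2*r2^2 + (1/2)*p0*q1^2*r1^2 + (-1/2)*p0*q0*q2*r0*r2 + (-1/2)*p0*q0*q1*r0*r1) * hp + ((-1)*p1*p2^2*r0*r1 + 1*p1^3*r0*r1 + (-1/2)*p0*p2^2*r2^2 + 1*p0*p2^2*r1^2 + (-1/2)*p0*p2^2*r0^2 + (-1/2)*p0*p1^2*r1^2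 + (-1/2)*p0*p1^2*r0^2) * hq + ((-1)*p2^3*q0*q2 + 1*p1^2*p2*q0*q2 + 1*p0*p2^2*q2^2 + (-1/2)*p0*p2^2*q1^2 + (-1/2)*p0*p1^2*q2^2) * hr + ((-1/2)*p2*q2*r0 + (1/2)*p2*q0*r2 + (-1/2)*p1*q1*r0 + (1/2)*p1*q0*r1 + (-1/2)*p0*q2*r2 + (1/2)*p0*q1*r1 + (-1/2)*p0*q0*r0) * hE

lemma key_2_0 (p0 p1 p2 q0 q1 q2 r0 r1 r2 : ℝ)
    (hp : p1^2 - p2^2 = p0^2) (hq : q1^2 - q2^2 = q0^2) (hr : r1^2 - r2^2 = r0^2)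
    (hE : (q1*p0-p1*q0)*(r1*p0-p1*r0)+(q2*p0-p2*q0)*(r2*p0-p2*r0) = 0) :
    ((q2*r0-q0*r2)*p1 - (q0*r1-q1*r0)*p2) * (p0*q1-p1*q0) * (p1*r2-p2*r1) = 0 := by
  linear_combination ((1/2)*p2*q2^2*r1*r2 + (-1/2)*p2*q1*q2*r2^2 + (1/2)*p2*q1*q2*r1^2 + (-1/2)*p2*q1*q2*r0^2 + (-1/2)*p2*q1^2*r1*r2 + (1/2)*p2*q0*q2*r0*r1 + (-1/2)*p2*q0*q1*r0*r2 + (1/2)*p2*q0^2*r1*r2 + (-1/2)*p1*q2^2*r2^2 + (1/2)*p1*q1^2*r1^2 + (-1/2)*p1*q1^2*r0^2 + (-1/2)*p1*q0*q2*r0*r2 + (-1/2)*p1*q0*q1*r0*r1 + (1/2)*p1*q0^2*r1^2 + (1/2)*p0*q1*q2*r0*r2 + (1/2)*p0*q1^2*r0*r1 + (-1/2)*p0*q0*q2*r1*r2 + (-1/2)*p0*q0*q1*r1^2) * hp + ((-1/2)*p2^3*r1*r2 + (1/2)*p1*p2^2*r1^2 + (-1/2)*p1*p2^2*r0^2 +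 (1/2)*p1^2*p2*r1*r2 + (-1)*p1^3*r2^2 + (1/2)*p1^3*r1^2 + (-1/2)*p1^3*r0^2 + (-1/2)*p0*p2^2*r0*r1 + (1/2)*p0*p1*p2*r0*r2) * hq + ((1/2)*p2^3*q1*q2 + (1/2)*p1*p2^2*q2^2 + (-1/2)*p1^2*p2*q1*q2 + (1/2)*p1^3*q2^2 + (-1)*p1^3*q1^2 + (1/2)*p0*p2^2*q0*q1 + (1/2)*p0*p1*p2*q0*q2 + 1*p0*p1^2*q0*q1) * hr + ((1/2)*p2*q2*r1 + (-1/2)*p2*q1*r2 + (-1/2)*p1*q2*r2 + (1/2)*p1*q1*r1 + (-1/2)*p1*q0*r0 + (1/2)*p0*q1*r0 + (-1/2)*p0*q0*r1) * hE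

lemma key_2_1 (p0 p1 p2 q0 q1 q2 r0 r1 r2 : ℝ)
    (hp : p1^2 - p2^2 = p0^2) (hq : q1^2 - q2^2 = q0^2) (hr : r1^2 - r2^2 = r0^2)
    (hE : (q1*p0-p1*q0)*(r1*p0-p1*r0)+(q2*p0-p2*q0)*(r2*p0-p2*r0) = 0) :
    ((q2*r0-q0*r2)*p1 - (q0*r1-q1*r0)*p2) * (p0*q1-p1*q0) * (p2*r0-p0*r2) = 0 := by
  linear_combination ((-1)*p2*q2^2*r0*r2 + 1*p2*q1^2*r0*r2 + (-1/2)*p2*q0*q2*r0^2 + (-1/2)*p2*q0^2*r0*r2 + (-1)*p1*q0*q1*r2^2 + 1*p1*q0*q1*r1^2 + (-1/2)*p1*q0*q1*r0^2 + (-1/2)*p1*q0^2*r0*r1 + (1/2)*p0*q2^2*r2^2 + (-1/2)*p0*q1^2*r1^2 + (1/2)*p0*q0*q2*r0*r2 + (1/2)*p0*q0*q1*r0*r1) * hp + (1*p2^3*r0*r2 + (-1)*p1^2*p2*r0*r2 + (-1/2)*p0*p2^2*r2^2 + (1/2)*p0*p2^2*r0^2 + 1*p0*p1^2*r2^2 +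 (-1/2)*p0*p1^2*r1^2 + (1/2)*p0*p1^2*r0^2) * hq + (1*p1*p2^2*q0*q1 + (-1)*p1^3*q0*q1 + (-1/2)*p0*p2^2*q1^2 + (-1/2)*p0*p1^2*q2^2 + 1*p0*p1^2*q1^2) * hr + ((-1/2)*p2*q2*r0 + (1/2)*p2*q0*r2 + (-1/2)*p1*q1*r0 + (1/2)*p1*q0*r1 + (1/2)*p0*q2*r2 + (-1/2)*p0*q1*r1 + (1/2)*p0*q0*r0) * hE

lemma key_2_2 (p0 p1 p2 q0 q1 q2 r0 r1 r2 : ℝ)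
    (hp : p1^2 - p2^2 = p0^2) (hq : q1^2 - q2^2 = q0^2) (hr : r1^2 - r2^2 = r0^2)
    (hE : (q1*p0-p1*q0)*(r1*p0-p1*r0)+(q2*p0-p2*q0)*(r2*p0-p2*r0) = 0) :
    ((q2*r0-q0*r2)*p1 - (q0*r1-q1*r0)*p2) * (p0*q1-p1*q0) * (p0*r1-p1*r0) = 0 := by
  linear_combination ((1/2)*p2*q2^2*r0*r1 + (-1/2)*p2*q1^2*r0*r1 + (-1/2)*p2*q0*q1*r2^2 + (1/2)*p2*q0*q1*r1^2 + (1/2)*p1*q2^2*r0*r2 + (-1/2)*p1*q1^2*r0*r2 + (-1/2)*p1*q0*q2*r2^2 + (1/2)*p1*q0*q2*r1^2 + (-1/2)*p0*q2^2*r1*r2 + (1/2)*p0*q1*q2*r2^2 + (-1/2)*p0*q1*q2*r1^2 + (1/2)*p0*q1^2*r1*r2) * hp + ((-1/2)*p2^3*r0*r1 + (-1/2)*p1*p2^2*r0*r2 + (1/2)*p1^2*p2*r0*r1 + (1/2)*p1^3*r0*r2 + (1/2)*p0*p2^2*r1*r2 + (1/2)*p0*p1*p2*r2^2 + (-1/2)*p0*p1*p2*r1^2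 + (-1/2)*p0*p1^2*r1*r2) * hq + ((1/2)*p2^3*q0*q1 + (1/2)*p1*p2^2*q0*q2 + (-1/2)*p1^2*p2*q0*q1 + (-1/2)*p1^3*q0*q2 + (-1/2)*p0*p2^2*q1*q2 + (-1/2)*p0*p1*p2*q2^2 + (1/2)*p0*p1*p2*q1^2 + (1/2)*p0*p1^2*q1*q2) * hr + ((1/2)*p2*q1*r0 + (-1/2)*p2*q0*r1 + (1/2)*p1*q2*r0 + (-1/2)*p1*q0*r2 + (-1/2)*p0*q2*r1 + (1/2)*p0*q1*r2) * hE

lemma cross3_ne_components (a b : PP) (h : cross3 a b ≠ 0) :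
    a 1 * b 2 - a 2 * b 1 ≠ 0 ∨ a 2 * b 0 - a 0 * b 2 ≠ 0 ∨ a 0 * b 1 - a 1 * b 0 ≠ 0 := by
  by_contra hc
  push_neg at hc
  exact h (by funext k; fin_cases k <;> simp [cross3, hc.1, hc.2.1, hc.2.2])

lemma fregier_aux (p : PP) (hpC : p 1 ^ 2 - p 2 ^ 2 = p 0 ^ 2) :
    IsFregier (fun v => v 1 ^ 2 - v 2 ^ 2 = v 0 ^ 2) EuclidPerp p ![0, p 1, -(p 2)] := by
  intro q r hq hr hpq hpr hperp
  have hq' : q 1 ^ 2 - q 2 ^ 2 = q 0 ^ 2 := hq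
  have hr' : r 1 ^ 2 - r 2 ^ 2 = r 0 ^ 2 := hr
  unfold EuclidPerp at hperp
  have hu := cross3_ne_components p q hpq
  have hv := cross3_ne_components p r hpr
  have hG : (q 2 * r 0 - q 0 * r 2) * p 1 - (q 0 * r 1 - q 1 * r 0) * p 2 = 0 := by
    rcases hu with hu | hu | hu <;> rcases hv with hv | hv | hv
    · have key := key_0_0 (p 0) (p 1) (p 2) (q 0) (q 1) (q 2) (r 0) (r 1) (r 2) hpC hq' hr' hperp
      exact (mul_eq_zero.mp ((mul_eq_zero.mp key).resolve_right hv)).resolve_right hu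
    · have key := key_0_1 (p 0) (p 1) (p 2) (q 0) (q 1) (q 2) (r 0) (r 1) (r 2) hpC hq' hr' hperp
      exact (mul_eq_zero.mp ((mul_eq_zero.mp key).resolve_right hv)).resolve_right hu
    · have key := key_0_2 (p 0) (p 1) (p 2) (q 0) (q 1) (q 2) (r 0) (r 1) (r 2) hpC hq' hr' hperp
      exact (mul_eq_zero.mp ((mul_eq_zero.mp key).resolve_right hv)).resolve_right hu
    · have key := key_1_0 (p 0) (p 1) (p 2) (q 0) (q 1) (q 2) (r 0) (r 1) (r 2) hpC hq' hr' hperp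
      exact (mul_eq_zero.mp ((mul_eq_zero.mp key).resolve_right hv)).resolve_right hu
    · have key := key_1_1 (p 0) (p 1) (p 2) (q 0) (q 1) (q 2) (r 0) (r 1) (r 2) hpC hq' hr' hperp
      exact (mul_eq_zero.mp ((mul_eq_zero.mp key).resolve_right hv)).resolve_right hu
    · have key := key_1_2 (p 0) (p 1) (p 2) (q 0) (q 1) (q 2) (r 0) (r 1) (r 2) hpC hq' hr' hperp
      exact (mul_eq_zero.mp ((mul_eq_zero.mp key).resolve_right hv)).resolve_right hu
    · have key := key_2_0 (p 0) (p 1) (p 2) (q 0) (q 1) (q 2) (r 0) (r 1) (r 2) hpC hq' hr' hperp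
      exact (mul_eq_zero.mp ((mul_eq_zero.mp key).resolve_right hv)).resolve_right hu
    · have key := key_2_1 (p 0) (p 1) (p 2) (q 0) (q 1) (q 2) (r 0) (r 1) (r 2) hpC hq' hr' hperp
      exact (mul_eq_zero.mp ((mul_eq_zero.mp key).resolve_right hv)).resolve_right hu
    · have key := key_2_2 (p 0) (p 1) (p 2) (q 0) (q 1) (q 2) (r 0) (r 1) (r 2) hpC hq' hr' hperp
      exact (mul_eq_zero.mp ((mul_eq_zero.mp key).resolve_right hv)).resolve_right hu
  simp only [Coll, dot3, cross3, Matrix.cons_val_zero, Matrix.cons_val_one, Matrix.head_cons,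
    Matrix.cons_val_two, Matrix.tail_cons]
  linear_combination hG

/-- For the right hyperbola `C : x₁² − x₂² = x₀²`, the Frégier point
at every `p ∈ C` lies on the line at infinity `x₀ = 0`, and its direction
`(f 1, f 2)` is the normal direction `(p 1, −p 2)` of `C` at `p`. -/
theorem fregier_point_of_right_hyperbola_at_infinity
    (p f : PP) (hp : p ≠ 0) (hpC : p 1 ^ 2 - p 2 ^ 2 = p 0 ^ 2)
    (hf : IsFregierPoint (fun v => v 1 ^ 2 - v 2 ^ 2 = v 0 ^ 2) EuclidPerp p f) :
    f 0 = 0 ∧ f 1 * (-(p 2)) - f 2 * p 1 = 0 := by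
  have hf0ne : (![0, p 1, -(p 2)] : PP) ≠ 0 := by
    intro h
    have h1 : p 1 = 0 := by simpa using congrFun h 1
    have h2 : p 2 = 0 := by simpa using congrFun h 2
    have h0 : p 0 = 0 := by nlinarith [hpC]
    exact hp (funext fun k => by fin_cases k <;> simp [h0, h1, h2])
  obtain ⟨t, ht, heq⟩ := hf.2.2 ![0, p 1, -(p 2)] hf0ne (fregier_aux p hpC)
  have e0 : (0 : ℝ) = t * f 0 := by simpa using congrFun heq 0
  have e1 : p 1 = t * f 1 := by simpa using congrFun heq 1
  have e2 : -(p 2) = t * f 2 := by simpa using congrFun heq 2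
  constructor
  · rcases mul_eq_zero.mp e0.symm with h | h
    · exact absurd h ht
    · exact h
  · linear_combination f 1 * e2 - f 2 * e1
end

section
/- Let C: −2(x₁² + x₂² − x₀²) + (x₁² − x₀²) = 0, i.e., x₁² + 2x₂² = x₀² (the hyperbolic circle with λ = −2 tangent to the absolute conic at [1,1,0] and [1,−1,0]). Then for every p ∈ C, the lines joining p to the two points of tangency [1,1,0] and [1,−1,0] are perpendicular in the hyperbolic sense, and the Frégier point f(C,p) lies on the line x₂ = 0. -/
/-- Tangency: if `p`, `q` lie on the conic `x₁² + 2x₂² = x₀²` and are conjugate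
(i.e. `q` lies on the polar of `p`), then `p × q = 0`. -/
lemma tangent_cross_zero (p q : PP)
    (hp : p 1 ^ 2 + 2 * p 2 ^ 2 = p 0 ^ 2)
    (hq : q 1 ^ 2 + 2 * q 2 ^ 2 = q 0 ^ 2)
    (hB : p 1 * q 1 + 2 * p 2 * q 2 - p 0 * q 0 = 0) :
    cross3 p q = 0 := by
  have he0 : p 1 * q 2 - p 2 * q 1 = 0 := by
    have hsq : 2 * (p 1 * q 2 - p 2 * q 1) ^ 2 = 0 := by
      linear_combination (q 1 ^ 2 + 2 * q 2 ^ 2) * hp + p 0 ^ 2 * hq +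
        (-(p 1 * q 1 + 2 * p 2 * q 2 + p 0 * q 0)) * hB
    have h2 : (p 1 * q 2 - p 2 * q 1) ^ 2 = 0 := by linarith
    exact pow_eq_zero_iff two_ne_zero |>.mp h2
  rcases eq_or_ne (p 0) 0 with h0 | h0
  · have hb1 : p 1 = 0 := by nlinarith [sq_nonneg (p 1), sq_nonneg (p 2)]
    have hb2 : p 2 = 0 := by nlinarith [sq_nonneg (p 1), sq_nonneg (p 2)]
    funext i
    fin_cases i <;> simp [cross3, h0, hb1, hb2]
  · have he1 : p 2 * q 0 - p 0 * q 2 = 0 := by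
      have key : p 0 * (p 2 * q 0 - p 0 * q 2) = 0 := by
        linear_combination q 2 * hp - p 2 * hB - p 1 * he0
      rcases mul_eq_zero.mp key with h | h
      · exact absurd h h0
      · exact h
    have he2 : p 0 * q 1 - p 1 * q 0 = 0 := by
      have key : p 0 * (p 0 * q 1 - p 1 * q 0) = 0 := by
        linear_combination (-(q 1)) * hp + p 1 * hB - 2 * p 2 * he0
      rcases mul_eq_zero.mp key with h | h
      · exact absurd h h0
      · exact h
    funext i
    fin_cases i <;> simp [cross3]
    · linarith
    · linarith [he1]
    · linarith [he2]

/-- The explicit Frégier point `(p₀, p₁, 0)` works for the conic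
`x₁² + 2x₂² = x₀²` with hyperbolic perpendicularity. -/
lemma fregier_explicit (p : PP) (hpC : p 1 ^ 2 + 2 * p 2 ^ 2 = p 0 ^ 2) :
    IsFregier (fun v => v 1 ^ 2 + 2 * v 2 ^ 2 = v 0 ^ 2) HypPerp p ![p 0, p 1, 0] := by
  intro q r hq hr hcq hcr hperp
  simp only [HypPerp, cross3] at hperp
  simp only [Matrix.cons_val_zero, Matrix.cons_val_one, Matrix.head_cons,
    Matrix.cons_val_two, Matrix.tail_cons] at hperp
  have hBq : p 1 * q 1 + 2 * p 2 * q 2 - p 0 * q 0 ≠ 0 := by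
    intro h
    exact hcq (tangent_cross_zero p q hpC hq h)
  have hBr : p 1 * r 1 + 2 * p 2 * r 2 - p 0 * r 0 ≠ 0 := by
    intro h
    exact hcr (tangent_cross_zero p r hpC hr h)
  have key : ((q 1 * r 2 - q 2 * r 1) * p 0 + (q 2 * r 0 - q 0 * r 2) * p 1) *
      ((p 1 * q 1 + 2 * p 2 * q 2 - p 0 * q 0) * (p 1 * r 1 + 2 * p 2 * r 2 - p 0 * r 0)) = 0 := by
    linear_combination
      (1 * p 2 * p 2 * p 2 * r 0 * r 1 + (-1) * p 1 * p 2 * p 2 * r 0 * r 2 +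
        1 * p 1 * p 1 * p 2 * r 0 * r 1 + (-1) * p 1 * p 1 * p 1 * r 0 * r 2 +
        (-1) * p 0 * p 2 * p 2 * r 1 * r 2 + (-1) * p 0 * p 1 * p 2 * r 2 * r 2 +
        (-1) * p 0 * p 1 * p 2 * r 1 * r 1 + 1 * p 0 * p 0 * p 1 * r 0 * r 2) * hq +
      ((-1) * p 2 * p 2 * p 2 * q 0 * q 1 + 1 * p 1 * p 2 * p 2 * q 0 * q 2 +
        (-1) * p 1 * p 1 * p 2 * q 0 * q 1 + 1 * p 1 * p 1 * p 1 * q 0 * q 2 +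
        1 * p 0 * p 2 * p 2 * q 1 * q 2 + 1 * p 0 * p 1 * p 2 * q 2 * q 2 +
        1 * p 0 * p 1 * p 2 * q 1 * q 1 + (-1) * p 0 * p 0 * p 1 * q 0 * q 2) * hr +
      ((-1) * p 2 * q 2 * q 2 * r 0 * r 1 + (-1) * p 2 * q 1 * q 1 * r 0 * r 1 +
        1 * p 2 * q 0 * q 1 * r 2 * r 2 + 1 * p 2 * q 0 * q 1 * r 1 * r 1 +
        3 * p 1 * q 2 * q 2 * r 0 * r 2 + 1 * p 1 * q 1 * q 2 * r 0 * r 1 +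
        1 * p 1 * q 1 * q 1 * r 0 * r 2 + (-3) * p 1 * q 0 * q 2 * r 2 * r 2 +
        (-1) * p 1 * q 0 * q 2 * r 1 * r 1 + (-1) * p 1 * q 0 * q 1 * r 1 * r 2 +
        (-1) * p 0 * q 2 * q 2 * r 1 * r 2 + 1 * p 0 * q 1 * q 2 * r 2 * r 2 +
        (-1) * p 0 * q 1 * q 2 * r 1 * r 1 + 1 * p 0 * q 1 * q 1 * r 1 * r 2 +
        1 * p 0 * q 0 * q 2 * r 0 * r 1 + (-1) * p 0 * q 0 * q 1 * r 0 * r 2) * hpC +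
      ((-1) * p 2 * q 1 * r 0 + 1 * p 2 * q 0 * r 1 + 1 * p 1 * q 2 * r 0 +
        (-1) * p 1 * q 0 * r 2 + (-1) * p 0 * q 2 * r 1 + 1 * p 0 * q 1 * r 2) * hperp
  have hG : (q 1 * r 2 - q 2 * r 1) * p 0 + (q 2 * r 0 - q 0 * r 2) * p 1 = 0 := by
    rcases mul_eq_zero.mp key with h | h
    · exact h
    · exact absurd h (mul_ne_zero hBq hBr)
  simp only [Coll, dot3, cross3]
  simp only [Matrix.cons_val_zero, Matrix.cons_val_one, Matrix.head_cons,
    Matrix.cons_val_two, Matrix.tail_cons]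
  linear_combination hG

/-- For the hyperbolic circle `C : x₁² + 2x₂² = x₀²` (the case
`λ = −2`), for every `p ∈ C` the lines joining `p` to the points of tangency
`[1,1,0]` and `[1,−1,0]` are hyperbolically perpendicular, and the Frégier point
of `C` at `p` lies on the line `x₂ = 0`. -/
theorem hyperbolic_circle_lambda_neg_two
    (p : PP) (hp : p ≠ 0) (hpC : p 1 ^ 2 + 2 * p 2 ^ 2 = p 0 ^ 2)
    (h1 : cross3 p ![(1 : ℝ), 1, 0] ≠ 0) (h2 : cross3 p ![(1 : ℝ), -1, 0] ≠ 0) :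
    HypPerp p ![(1 : ℝ), 1, 0] ![(1 : ℝ), -1, 0] ∧
    ∀ f : PP,
      IsFregierPoint (fun v => v 1 ^ 2 + 2 * v 2 ^ 2 = v 0 ^ 2) HypPerp p f →
      f 2 = 0 := by
  constructor
  · simp only [HypPerp, cross3]
    simp only [Matrix.cons_val_zero, Matrix.cons_val_one, Matrix.head_cons,
      Matrix.cons_val_two, Matrix.tail_cons]
    ring_nf
    linarith [hpC]
  · intro f hf
    obtain ⟨hf0, hfis, huniq⟩ := hf
    have hf0ne : (![p 0, p 1, 0] : PP) ≠ 0 := by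
      intro h
      have h0 : p 0 = 0 := by
        have := congrFun h 0; simpa using this
      have h1' : p 1 = 0 := by
        have := congrFun h 1; simpa using this
      have h2' : p 2 = 0 := by nlinarith [sq_nonneg (p 2)]
      apply hp
      funext i
      fin_cases i <;> simp [h0, h1', h2']
    obtain ⟨t, ht, heq⟩ := huniq ![p 0, p 1, 0] hf0ne (fregier_explicit p hpC)
    have h2eq : t * f 2 = 0 := by
      have h := congrFun heq 2
      simp only [Matrix.cons_val_two, Matrix.tail_cons, Matrix.head_cons, Pi.smul_apply,
        smul_eq_mul] at h
      linarith [h]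
    rcases mul_eq_zero.mp h2eq with h | h
    · exact absurd h ht
    · exact h
end

section
/- Let C be a regular conic, p ∈ C, and suppose the two isotropic lines through p (the tangents from p to the absolute conic N) meet C again in points i and ī distinct from p. Then the pole f of the line i ∨ ī with respect to C has the Frégier property: for all q, r ∈ C with lines pq and pr perpendicular (conjugate with respect to N), the points q, r, f are collinear. -/
/-!
Write `β(x, y) = (M x) ⬝ y` for the polar form of `C`. The lines through `p` are spanned by the
isotropic lines `p i` and `p ī`; if `p q = a (p i) + b (p ī)` and `p r = c (p i) + d (p ī)`, then
`p q ⟂ p r` says exactly `a d + b c = 0`, since the absolute form vanishes on `p i` and `p ī`.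
Writing `q = l p + a i + b ī`, the conic condition on `q` eliminates `l` and gives
`β(q, i) β(p, q) = b² β(p, ī) β(i, ī)` and `β(q, ī) β(p, q) = a² β(p, i) β(i, ī)`, so
`a² d² = b² c²` yields `β(q, i) β(r, ī) = β(q, ī) β(r, i)`. By Binet–Cauchy, the difference of
the two sides is `det M` times the determinant of `q`, `r` and the pole `M⁻¹ (i × ī)`.
-/

open Matrix

theorem cross3_eq_crossProduct_s18 (a b : PP) : cross3 a b = a ⨯₃ b := rfl

theorem dot3_eq_dotProduct (a b : PP) : dot3 a b = a ⬝ᵥ b := (vec3_dotProduct a b).symm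

theorem Matrix.IsSymm.mulVec_dotProduct_comm {R n : Type*} [CommSemiring R] [Fintype n]
    {M : Matrix n n R} (hM : M.IsSymm) (x y : n → R) : M *ᵥ x ⬝ᵥ y = M *ᵥ y ⬝ᵥ x := by
  rw [dotProduct_comm, dotProduct_mulVec, ← mulVec_transpose, hM.eq]

section CommRing

variable {R : Type*} [CommRing R]

theorem cross_smul_add_smul_add_smul (u v w : Fin 3 → R) (l a b : R) :
    u ⨯₃ (l • u + a • v + b • w) = a • (u ⨯₃ v) + b • (u ⨯₃ w) := by
  simp

theorem cross_cross_cross_eq_smul (u v w : Fin 3 → R) :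
    (u ⨯₃ v) ⨯₃ (u ⨯₃ w) = (u ⨯₃ v ⬝ᵥ w) • u := by
  rw [cross_cross_eq_smul_sub_smul', dot_self_cross, zero_smul, sub_zero]

theorem cross_dotProduct_smul_eq (x y z u : Fin 3 → R) :
    (x ⨯₃ y ⬝ᵥ z) • u = (u ⨯₃ y ⬝ᵥ z) • x + (x ⨯₃ u ⬝ᵥ z) • y + (x ⨯₃ y ⬝ᵥ u) • z := by
  ext k
  fin_cases k <;> simp [cross_apply, vecHead, vecTail] <;> ring

theorem mulVec_cross_mulVec_dotProduct_mulVec (M : Matrix (Fin 3) (Fin 3) R)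
    (u v w : Fin 3 → R) : (M *ᵥ u) ⨯₃ (M *ᵥ v) ⬝ᵥ M *ᵥ w = M.det * (u ⨯₃ v ⬝ᵥ w) := by
  simp [cross_apply, vec3_dotProduct, mulVec, det_fin_three, vecHead, vecTail]
  ring

/-- The pole of the line `i j` lies on the line `q r` iff the two lines are conjugate. -/
theorem cross_dotProduct_inv_mulVec_cross_eq_zero_iff {M : Matrix (Fin 3) (Fin 3) R}
    (hM : IsUnit M.det) (q r i j : Fin 3 → R) :
    q ⨯₃ r ⬝ᵥ M⁻¹ *ᵥ (i ⨯₃ j) = 0 ↔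
      (M *ᵥ q ⬝ᵥ i) * (M *ᵥ r ⬝ᵥ j) = (M *ᵥ q ⬝ᵥ j) * (M *ᵥ r ⬝ᵥ i) := by
  have h := mulVec_cross_mulVec_dotProduct_mulVec M q r (M⁻¹ *ᵥ (i ⨯₃ j))
  rw [mulVec_mulVec, mul_nonsing_inv M hM, one_mulVec, cross_dot_cross] at h
  rw [← hM.mul_right_eq_zero, ← h, sub_eq_zero]

end CommRing

section Field

variable {K : Type*} [Field K]

theorem exists_eq_smul_add_smul_add_smul {x y z : Fin 3 → K} (h : x ⨯₃ y ⬝ᵥ z ≠ 0)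
    (u : Fin 3 → K) : ∃ a b c : K, u = a • x + b • y + c • z := by
  refine ⟨(x ⨯₃ y ⬝ᵥ z)⁻¹ * (u ⨯₃ y ⬝ᵥ z), (x ⨯₃ y ⬝ᵥ z)⁻¹ * (x ⨯₃ u ⬝ᵥ z),
    (x ⨯₃ y ⬝ᵥ z)⁻¹ * (x ⨯₃ y ⬝ᵥ u), ?_⟩
  rw [← smul_right_inj h, cross_dotProduct_smul_eq]
  simp only [smul_add, smul_smul, mul_inv_cancel_left₀ h]

theorem exists_eq_smul_add_smul_of_cross_dotProduct_eq_zero {x y z : Fin 3 → K}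
    (hxy : x ⨯₃ y ≠ 0) (h : x ⨯₃ y ⬝ᵥ z = 0) : ∃ a b : K, z = a • x + b • y := by
  obtain ⟨k, hk⟩ := Function.ne_iff.mp hxy
  have hd : x ⨯₃ y ⬝ᵥ Pi.single k 1 ≠ 0 := by simpa using hk
  refine ⟨(x ⨯₃ y ⬝ᵥ Pi.single k 1)⁻¹ * (z ⨯₃ y ⬝ᵥ Pi.single k 1),
    (x ⨯₃ y ⬝ᵥ Pi.single k 1)⁻¹ * (x ⨯₃ z ⬝ᵥ Pi.single k 1), ?_⟩
  rw [← smul_right_inj hd, cross_dotProduct_smul_eq, h, zero_smul, add_zero]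
  simp only [smul_add, smul_smul, mul_inv_cancel_left₀ hd]

theorem exists_smul_eq_of_cross_eq_zero {n v : Fin 3 → K} (hn : n ≠ 0) (h : n ⨯₃ v = 0) :
    ∃ s : K, s • n = v := by
  have := mt crossProduct_ne_zero_iff_linearIndependent.mpr (not_not.mpr h)
  rwa [LinearIndependent.pair_iff' hn, not_forall_not] at this

/-- A regular conic contains no line. -/
theorem mulVec_dotProduct_ne_zero_of_isotropic {M : Matrix (Fin 3) (Fin 3) K} (hM : M.IsSymm)
    (hMdet : IsUnit M.det) {x y : Fin 3 → K} (hxy : x ⨯₃ y ≠ 0)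
    (hx : M *ᵥ x ⬝ᵥ x = 0) (hy : M *ᵥ y ⬝ᵥ y = 0) : M *ᵥ x ⬝ᵥ y ≠ 0 := by
  intro hxy0
  have parallel : ∀ v, v ⬝ᵥ x = 0 → v ⬝ᵥ y = 0 → ∃ s : K, s • (x ⨯₃ y) = v := fun v hvx hvy ↦
    exists_smul_eq_of_cross_eq_zero hxy <| by
      rw [cross_cross_eq_smul_sub_smul, dotProduct_comm x, dotProduct_comm y, hvx, hvy]
      simp
  obtain ⟨s, hs⟩ := parallel (M *ᵥ x) hx hxy0
  obtain ⟨t, ht⟩ := parallel (M *ᵥ y) (by rwa [hM.mulVec_dotProduct_comm]) hy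
  have hts : t • x = s • y := by
    apply mulVec_injective_iff_isUnit.mpr ((isUnit_iff_isUnit_det M).mpr hMdet)
    rw [mulVec_smul, mulVec_smul, ← hs, ← ht, smul_smul, smul_smul, mul_comm]
  have hs0 := ((crossProduct_ne_zero_iff_linearIndependent.mp hxy).eq_zero_of_pair' hts).2
  have hx0 : x = 0 := eq_zero_of_mulVec_eq_zero hMdet.ne_zero <| by rw [← hs, hs0, zero_smul]
  simp [hx0] at hxy

theorem mul_add_mul_eq_zero_of_isotropic {N : Matrix (Fin 3) (Fin 3) K} (hN : N.IsSymm)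
    {u v : Fin 3 → K} (hu : N *ᵥ u ⬝ᵥ u = 0) (hv : N *ᵥ v ⬝ᵥ v = 0) (huv : N *ᵥ u ⬝ᵥ v ≠ 0)
    {a b c d : K} (h : N *ᵥ (a • u + b • v) ⬝ᵥ (c • u + d • v) = 0) : a * d + b * c = 0 := by
  simp only [mulVec_add, mulVec_smul, add_dotProduct, dotProduct_add, smul_dotProduct,
    dotProduct_smul, smul_eq_mul, hN.mulVec_dotProduct_comm v u, hu, hv] at h
  refine (mul_eq_zero.mp ?_).resolve_right huv
  linear_combination h

variable [NeZero (2 : K)]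

theorem mul_eq_zero_of_isotropic_smul_add_smul {M : Matrix (Fin 3) (Fin 3) K} (hM : M.IsSymm)
    {x y : Fin 3 → K} (hx : M *ᵥ x ⬝ᵥ x = 0) (hy : M *ᵥ y ⬝ᵥ y = 0) {a b : K}
    (h : M *ᵥ (a • x + b • y) ⬝ᵥ (a • x + b • y) = 0) : a * b * (M *ᵥ x ⬝ᵥ y) = 0 := by
  simp only [mulVec_add, mulVec_smul, add_dotProduct, dotProduct_add, smul_dotProduct,
    dotProduct_smul, smul_eq_mul, hM.mulVec_dotProduct_comm y x, hx, hy] at h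
  refine mul_left_cancel₀ (two_ne_zero (α := K)) ?_
  linear_combination h

theorem cross_dotProduct_ne_zero_of_isotropic {M : Matrix (Fin 3) (Fin 3) K} (hM : M.IsSymm)
    (hMdet : IsUnit M.det) {x y z : Fin 3 → K} (hx : M *ᵥ x ⬝ᵥ x = 0) (hy : M *ᵥ y ⬝ᵥ y = 0)
    (hz : M *ᵥ z ⬝ᵥ z = 0) (hxy : x ⨯₃ y ≠ 0) (hxz : x ⨯₃ z ≠ 0) (hyz : y ⨯₃ z ≠ 0) :
    x ⨯₃ y ⬝ᵥ z ≠ 0 := by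
  intro h
  obtain ⟨a, b, rfl⟩ := exists_eq_smul_add_smul_of_cross_dotProduct_eq_zero hxy h
  have hab := mul_eq_zero_of_isotropic_smul_add_smul hM hx hy hz
  rcases mul_eq_zero.mp ((mul_eq_zero.mp hab).resolve_right
    (mulVec_dotProduct_ne_zero_of_isotropic hM hMdet hxy hx hy)) with rfl | rfl
  · simp at hyz
  · simp at hxz

theorem mulVec_dotProduct_mul_eq_of_isotropic {M : Matrix (Fin 3) (Fin 3) K} (hM : M.IsSymm)
    {p i j q : Fin 3 → K} (hp : M *ᵥ p ⬝ᵥ p = 0) (hi : M *ᵥ i ⬝ᵥ i = 0) (hj : M *ᵥ j ⬝ᵥ j = 0)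
    {l a b : K} (hq : q = l • p + a • i + b • j) (hqC : M *ᵥ q ⬝ᵥ q = 0) :
    (M *ᵥ q ⬝ᵥ i) * (M *ᵥ p ⬝ᵥ q) = b ^ 2 * (M *ᵥ p ⬝ᵥ j) * (M *ᵥ i ⬝ᵥ j) := by
  subst hq
  simp only [mulVec_add, mulVec_smul, add_dotProduct, dotProduct_add, smul_dotProduct,
    dotProduct_smul, smul_eq_mul, hM.mulVec_dotProduct_comm i p, hM.mulVec_dotProduct_comm j p,
    hM.mulVec_dotProduct_comm j i, hp, hi, hj] at hqC ⊢
  refine mul_left_cancel₀ (two_ne_zero (α := K)) ?_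
  linear_combination (M *ᵥ p ⬝ᵥ i) * hqC

/-- Projection from `p` carries harmonic lines `p q`, `p r` (with respect to `p i`, `p j`) to
harmonic points `q`, `r` (with respect to `i`, `j`) of the conic. -/
theorem mulVec_dotProduct_mul_eq_of_mul_add_mul_eq_zero {M : Matrix (Fin 3) (Fin 3) K}
    (hM : M.IsSymm) {p i j q r : Fin 3 → K} (hp : M *ᵥ p ⬝ᵥ p = 0) (hi : M *ᵥ i ⬝ᵥ i = 0)
    (hj : M *ᵥ j ⬝ᵥ j = 0) {l a b m c d : K} (hq : q = l • p + a • i + b • j)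
    (hr : r = m • p + c • i + d • j) (hqC : M *ᵥ q ⬝ᵥ q = 0) (hrC : M *ᵥ r ⬝ᵥ r = 0)
    (hpq : M *ᵥ p ⬝ᵥ q ≠ 0) (hpr : M *ᵥ p ⬝ᵥ r ≠ 0) (harmonic : a * d + b * c = 0) :
    (M *ᵥ q ⬝ᵥ i) * (M *ᵥ r ⬝ᵥ j) = (M *ᵥ q ⬝ᵥ j) * (M *ᵥ r ⬝ᵥ i) := by
  have hqi := mulVec_dotProduct_mul_eq_of_isotropic hM hp hi hj hq hqC
  have hri := mulVec_dotProduct_mul_eq_of_isotropic hM hp hi hj hr hrC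
  have hqj := mulVec_dotProduct_mul_eq_of_isotropic hM hp hj hi
    (hq.trans (add_right_comm _ _ _)) hqC
  have hrj := mulVec_dotProduct_mul_eq_of_isotropic hM hp hj hi
    (hr.trans (add_right_comm _ _ _)) hrC
  rw [hM.mulVec_dotProduct_comm j i] at hqj hrj
  refine mul_left_cancel₀ (mul_ne_zero hpq hpr) ?_
  linear_combination (M *ᵥ q ⬝ᵥ i) * (M *ᵥ p ⬝ᵥ q) * hrj
    + c ^ 2 * (M *ᵥ p ⬝ᵥ i) * (M *ᵥ i ⬝ᵥ j) * hqi
    - (M *ᵥ q ⬝ᵥ j) * (M *ᵥ p ⬝ᵥ q) * hri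
    - d ^ 2 * (M *ᵥ p ⬝ᵥ j) * (M *ᵥ i ⬝ᵥ j) * hqj
    + (M *ᵥ p ⬝ᵥ i) * (M *ᵥ p ⬝ᵥ j) * (M *ᵥ i ⬝ᵥ j) ^ 2 * (b * c - a * d) * harmonic

end Field

/-- Let `C` be a regular conic (symmetric regular matrix `M`) and
`N` a regular absolute conic (symmetric regular matrix `A`), `p ∈ C`, and suppose
the two isotropic lines through `p` (lines through `p` tangent to `N`, i.e.
self-conjugate w.r.t. `A`) meet `C` again in points `i`, `ī` distinct from `p`.
Then the pole `f = M⁻¹ (i ∨ ī)` of the line `i ∨ ī` with respect to `C` has the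
Frégier property: for all `q, r ∈ C` with `pq ⟂ pr`, the points `q, r, f` are
collinear. -/
theorem pole_of_isotropic_chord_is_fregier_point
    (M A : Matrix (Fin 3) (Fin 3) ℝ) (hM : M.IsSymm) (hMreg : IsUnit M.det)
    (hA : A.IsSymm) (hAreg : IsUnit A.det)
    (p i ibar : PP) (hp : p ≠ 0)
    (hpC : dot3 (M.mulVec p) p = 0)
    (hiC : dot3 (M.mulVec i) i = 0) (hibarC : dot3 (M.mulVec ibar) ibar = 0)
    (hpi : cross3 p i ≠ 0) (hpibar : cross3 p ibar ≠ 0)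
    (hii : cross3 i ibar ≠ 0)
    (hiso1 : dot3 (cross3 p i) (A⁻¹.mulVec (cross3 p i)) = 0)
    (hiso2 : dot3 (cross3 p ibar) (A⁻¹.mulVec (cross3 p ibar)) = 0) :
    ∀ q r : PP, dot3 (M.mulVec q) q = 0 → dot3 (M.mulVec r) r = 0 →
      cross3 p q ≠ 0 → cross3 p r ≠ 0 →
      dot3 (cross3 p q) (A⁻¹.mulVec (cross3 p r)) = 0 →
      Coll q r (M⁻¹.mulVec (cross3 i ibar)) := by
  intro q r hqC hrC hpq hpr hperp
  simp only [Coll, cross3_eq_crossProduct_s18, dot3_eq_dotProduct] at *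
  rw [dotProduct_comm] at hiso1 hiso2
  rw [dotProduct_comm, hA.inv.mulVec_dotProduct_comm] at hperp
  have hD := cross_dotProduct_ne_zero_of_isotropic hM hMreg hpC hiC hibarC hpi hpibar hii
  obtain ⟨l, a, b, hq⟩ := exists_eq_smul_add_smul_add_smul hD q
  obtain ⟨m, c, d, hr⟩ := exists_eq_smul_add_smul_add_smul hD r
  have hiso12 : A⁻¹ *ᵥ (p ⨯₃ i) ⬝ᵥ (p ⨯₃ ibar) ≠ 0 :=
    mulVec_dotProduct_ne_zero_of_isotropic hA.inv (isUnit_nonsing_inv_det A hAreg)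
      (by rw [cross_cross_cross_eq_smul]; exact smul_ne_zero hD hp) hiso1 hiso2
  rw [hq, hr, cross_smul_add_smul_add_smul, cross_smul_add_smul_add_smul] at hperp
  rw [cross_dotProduct_inv_mulVec_cross_eq_zero_iff hMreg]
  exact mulVec_dotProduct_mul_eq_of_mul_add_mul_eq_zero hM hpC hiC hibarC hq hr hqC hrC
    (mulVec_dotProduct_ne_zero_of_isotropic hM hMreg hpq hpC hqC)
    (mulVec_dotProduct_ne_zero_of_isotropic hM hMreg hpr hpC hrC)
    (mul_add_mul_eq_zero_of_isotropic hA.inv hiso1 hiso2 hiso12 hperp)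
end
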